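/- Let K be a compact subset of ℝ (viewed as a subset of ℂ), n ∈ ℕ, and w : K → [0,∞) a bounded upper semicontinuous function nonzero at at least n+1 points of K. Then the (unique) weighted Chebyshev polynomial of degree n on K with respect to w has real coefficients. -/

import Mathlib

/-!
For real `x` we have `|T̄(x)| = |T(x)|`, so the conjugate `T̄` of a weighted Chebyshev polynomial
`T` on a real set is again one, and the theorem follows from uniqueness. The midpoint `Q` of two
Chebyshev polynomials `T₁ ≠ T₂` is again Chebyshev, and by strict convexity of `|·|` its extremal
points are zeros of `T₁ - T₂`, so there are fewer than `n` of them. This is impossible: subtracting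
a small multiple of the Lagrange interpolant of `Q` at these points lowers the norm.
-/

open Polynomial Metric Set

/-- The weighted sup norm `‖P‖_{E,v} = sup_{z ∈ E} v(z) |P(z)|`. -/
noncomputable def wnorm (E : Set ℂ) (v : ℂ → ℝ) (P : Polynomial ℂ) : ℝ :=
  sSup ((fun z => v z * ‖P.eval z‖) '' E)

open Filter Topology

section Semicontinuity

variable {α : Type*} [TopologicalSpace α]

theorem UpperSemicontinuousOn.mul_continuousOn {s : Set α} {f g : α → ℝ}
    (hf : UpperSemicontinuousOn f s) (hf0 : ∀ x ∈ s, 0 ≤ f x) (hg : ContinuousOn g s)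
    (hg0 : ∀ x ∈ s, 0 ≤ g x) : UpperSemicontinuousOn (fun x => f x * g x) s := by
  intro x hx y hy
  have hlim : Tendsto (fun ε : ℝ => (f x + ε) * (g x + ε)) (𝓝 0) (𝓝 (f x * g x)) := by
    have hid : Tendsto (fun ε : ℝ => ε) (𝓝 0) (𝓝 0) := tendsto_id
    simpa using (tendsto_const_nhds.add hid).mul (tendsto_const_nhds.add hid)
  obtain ⟨ε, hεy, hε0⟩ := ((hlim.eventually_lt_const hy).filter_mono nhdsWithin_le_nhds).and
    (self_mem_nhdsWithin (s := Ioi (0 : ℝ)) (a := 0)) |>.exists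
  filter_upwards [hf x hx _ (lt_add_of_pos_right _ hε0),
    (hg x hx).eventually_lt_const (lt_add_of_pos_right _ hε0), self_mem_nhdsWithin]
    with z hfz hgz hz
  exact (mul_lt_mul'' hfz hgz (hf0 z hz) (hg0 z hz)).trans hεy

theorem IsCompact.exists_forall_convexCombination_le {K : Set α} (hK : IsCompact K) {f g : α → ℝ}
    {m : ℝ} (hm : 0 < m) (hf : UpperSemicontinuousOn f K) (hg : UpperSemicontinuousOn g K)
    (hfm : ∀ x ∈ K, f x ≤ m) (hfg : ∀ x ∈ K, f x = m → g x = 0) :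
    ∃ t ∈ Ioc (0 : ℝ) 1, ∃ μ < m, ∀ x ∈ K, (1 - t) * f x + t * g x ≤ μ := by
  obtain ⟨G, hG⟩ := hg.bddAbove_of_isCompact hK
  -- On the compact set `B` the usc function `f` attains a maximum `< m`; off `B`, `g < m / 2`.
  set B := K ∩ g ⁻¹' Ici (m / 2)
  obtain ⟨m', hm'0, hm'm, hfB⟩ : ∃ m', 0 ≤ m' ∧ m' < m ∧ ∀ x ∈ B, f x ≤ m' := by
    rcases B.eq_empty_or_nonempty with hB | hB
    · exact ⟨0, le_rfl, hm, by simp [hB]⟩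
    obtain ⟨x₀, ⟨hx₀K, hx₀g⟩, hmax⟩ :=
      (hf.mono inter_subset_left).exists_isMaxOn hB (hg.isCompact_inter_preimage_Ici hK _)
    have hfx₀ : f x₀ < m := (hfm x₀ hx₀K).lt_of_ne fun h => by
      simp only [mem_preimage, mem_Ici, hfg x₀ hx₀K h] at hx₀g
      linarith
    exact ⟨max (f x₀) 0, le_max_right _ _, max_lt hfx₀ hm,
      fun x hx => (hmax hx).trans (le_max_left _ _)⟩
  set G' := max G 0
  have hG' : ∀ x ∈ K, g x ≤ G' := fun x hx =>
    (hG (mem_image_of_mem g hx)).trans (le_max_left _ _)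
  set t := (m - m') / (G' + m)
  have hG'm : 0 < G' + m := by positivity
  have ht0 : 0 < t := div_pos (by linarith) hG'm
  have ht1 : t ≤ 1 := (div_le_one hG'm).2 (by linarith [le_max_right G 0])
  have htG : t * G' < m - m' := by
    rw [div_mul_eq_mul_div, div_lt_iff₀ hG'm]
    nlinarith
  refine ⟨t, ⟨ht0, ht1⟩, max (m - t * (m / 2)) (m' + t * G'),
    max_lt (by nlinarith) (by linarith), fun x hx => ?_⟩
  by_cases hxB : x ∈ B
  · have h1 : (1 - t) * f x ≤ m' := by nlinarith [hfB x hxB]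
    have h2 : t * g x ≤ t * G' := mul_le_mul_of_nonneg_left (hG' x hx) ht0.le
    exact (by linarith : _ ≤ m' + t * G').trans (le_max_right _ _)
  · have hgx : g x < m / 2 := by simpa [B, hx] using hxB
    have h1 : (1 - t) * f x ≤ (1 - t) * m := mul_le_mul_of_nonneg_left (hfm x hx) (by linarith)
    have h2 : t * g x ≤ t * (m / 2) := mul_le_mul_of_nonneg_left hgx.le ht0.le
    exact (by linarith : _ ≤ m - t * (m / 2)).trans (le_max_left _ _)

end Semicontinuity

theorem Polynomial.IsMonicOfDegree.add_smul_of_degree_lt {R : Type*} [CommRing R] [Nontrivial R]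
    {Q q : R[X]} {n : ℕ} (hQ : IsMonicOfDegree Q n) (hq : q.degree < n) (c : R) :
    IsMonicOfDegree (Q + c • q) n := by
  have hcq : (c • q).degree < Q.degree := by
    rw [degree_eq_natDegree hQ.ne_zero, hQ.natDegree_eq]
    exact (degree_smul_le c q).trans_lt hq
  exact ⟨(natDegree_add_eq_left_of_degree_lt hcq).trans hQ.natDegree_eq, hQ.monic.add_of_left hcq⟩

theorem Polynomial.IsMonicOfDegree.degree_sub_lt {R : Type*} [CommRing R] [Nontrivial R]
    {p q : R[X]} {n : ℕ} (hp : IsMonicOfDegree p n) (hq : IsMonicOfDegree q n) :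
    (p - q).degree < n := by
  have hdeg : p.degree = q.degree := by
    rw [degree_eq_natDegree hp.ne_zero, degree_eq_natDegree hq.ne_zero, hp.natDegree_eq,
      hq.natDegree_eq]
  have h := degree_sub_lt_right hdeg hq.ne_zero (by rw [hp.leadingCoeff_eq, hq.leadingCoeff_eq])
  rwa [degree_eq_natDegree hq.ne_zero, hq.natDegree_eq] at h

theorem eq_of_norm_le_of_norm_add_eq {E : Type*} [NormedAddCommGroup E] [NormedSpace ℝ E]
    [StrictConvexSpace ℝ E] {x y : E} {r : ℝ} (hx : ‖x‖ ≤ r) (hy : ‖y‖ ≤ r)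
    (h : ‖x + y‖ = 2 * r) : x = y := by
  have hsum : ‖x‖ + ‖y‖ = 2 * r := le_antisymm (by linarith) (h ▸ norm_add_le x y)
  exact eq_of_norm_eq_of_norm_add_eq (by linarith) (by linarith)

theorem Complex.eq_of_mul_norm_le_of_mul_norm_midpoint_eq {a b : ℂ} {c r : ℝ} (hc : 0 ≤ c)
    (hr : 0 < r) (ha : c * ‖a‖ ≤ r) (hb : c * ‖b‖ ≤ r) (hab : c * ‖2⁻¹ * (a + b)‖ = r) :
    a = b := by
  have hc0 : (c : ℂ) ≠ 0 := ofReal_ne_zero.2 fun h => by simp [h] at hab; linarith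
  have hnorm : ∀ z : ℂ, ‖(c : ℂ) * z‖ = c * ‖z‖ := fun z => by
    rw [norm_mul, norm_real, Real.norm_of_nonneg hc]
  refine mul_left_cancel₀ hc0 (eq_of_norm_le_of_norm_add_eq (r := r) ?_ ?_ ?_)
  · rwa [hnorm]
  · rwa [hnorm]
  · rw [← mul_add, hnorm, ← hab, norm_mul, norm_inv, Complex.norm_two]
    ring

section WeightedChebyshev

variable {K : Set ℂ} {w : ℂ → ℝ} {n : ℕ}

structure IsWeightedChebyshev (K : Set ℂ) (w : ℂ → ℝ) (n : ℕ) (T : ℂ[X]) : Prop where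
  isMonicOfDegree : IsMonicOfDegree T n
  minimal : ∀ P : ℂ[X], IsMonicOfDegree P n → wnorm K w T ≤ wnorm K w P

def extremalSet (K : Set ℂ) (w : ℂ → ℝ) (P : ℂ[X]) : Set ℂ :=
  {x ∈ K | w x * ‖P.eval x‖ = wnorm K w P}

theorem upperSemicontinuousOn_mul_norm_eval (husc : UpperSemicontinuousOn w K)
    (hw0 : ∀ x ∈ K, 0 ≤ w x) (P : ℂ[X]) :
    UpperSemicontinuousOn (fun x => w x * ‖P.eval x‖) K :=
  husc.mul_continuousOn hw0 (by fun_prop) fun _ _ => norm_nonneg _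

theorem mul_norm_eval_le_wnorm (hK : IsCompact K) (husc : UpperSemicontinuousOn w K)
    (hw0 : ∀ x ∈ K, 0 ≤ w x) (P : ℂ[X]) {x : ℂ} (hx : x ∈ K) :
    w x * ‖P.eval x‖ ≤ wnorm K w P :=
  le_csSup ((upperSemicontinuousOn_mul_norm_eval husc hw0 P).bddAbove_of_isCompact hK)
    (mem_image_of_mem _ hx)

theorem wnorm_le {P : ℂ[X]} {c : ℝ} (hK : K.Nonempty) (h : ∀ x ∈ K, w x * ‖P.eval x‖ ≤ c) :
    wnorm K w P ≤ c :=
  csSup_le (hK.image _) (forall_mem_image.2 h)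

theorem nonempty_of_wnorm_pos {P : ℂ[X]} (h : 0 < wnorm K w P) : K.Nonempty := by
  rw [nonempty_iff_ne_empty]
  rintro rfl
  simp [wnorm] at h

theorem wnorm_pos (hK : IsCompact K) (husc : UpperSemicontinuousOn w K)
    (hw0 : ∀ x ∈ K, 0 ≤ w x) {P : ℂ[X]} (hP : P ≠ 0) {S : Finset ℂ} (hSK : ↑S ⊆ K)
    (hS : P.natDegree < S.card) (hSw : ∀ z ∈ S, w z ≠ 0) : 0 < wnorm K w P := by
  obtain ⟨z, hzS, hPz⟩ : ∃ z ∈ S, P.eval z ≠ 0 := by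
    by_contra! h
    refine hS.not_ge (card_le_degree_of_subset_roots fun z hz => ?_)
    exact (mem_roots hP).2 (h z hz)
  have hwz : 0 < w z := (hw0 z (hSK hzS)).lt_of_ne (hSw z hzS).symm
  exact (mul_pos hwz (norm_pos_iff.2 hPz)).trans_le
    (mul_norm_eval_le_wnorm hK husc hw0 P (hSK hzS))

theorem wnorm_map_conj (hKreal : ∀ z ∈ K, z.im = 0) (P : ℂ[X]) :
    wnorm K w (P.map (starRingEnd ℂ)) = wnorm K w P := by
  refine congrArg sSup (image_congr fun x hx => ?_)
  rw [eval_map, ← Complex.conj_eq_iff_im.2 (hKreal x hx), eval₂_at_apply, Complex.norm_conj,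
    Complex.conj_eq_iff_im.2 (hKreal x hx)]

namespace IsWeightedChebyshev

variable {T T₁ T₂ : ℂ[X]}

theorem map_conj (hKreal : ∀ z ∈ K, z.im = 0) (hT : IsWeightedChebyshev K w n T) :
    IsWeightedChebyshev K w n (T.map (starRingEnd ℂ)) where
  isMonicOfDegree :=
    ⟨(hT.isMonicOfDegree.monic.natDegree_map _).trans hT.isMonicOfDegree.natDegree_eq,
      hT.isMonicOfDegree.monic.map _⟩
  minimal := wnorm_map_conj hKreal T ▸ hT.minimal

theorem wnorm_eq (h₁ : IsWeightedChebyshev K w n T₁) (h₂ : IsWeightedChebyshev K w n T₂) :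
    wnorm K w T₁ = wnorm K w T₂ :=
  le_antisymm (h₁.minimal T₂ h₂.isMonicOfDegree) (h₂.minimal T₁ h₁.isMonicOfDegree)

theorem midpoint (hK : IsCompact K) (husc : UpperSemicontinuousOn w K) (hw0 : ∀ x ∈ K, 0 ≤ w x)
    (hK0 : K.Nonempty) (h₁ : IsWeightedChebyshev K w n T₁) (h₂ : IsWeightedChebyshev K w n T₂) :
    IsWeightedChebyshev K w n (T₁ + (2⁻¹ : ℂ) • (T₂ - T₁)) where
  isMonicOfDegree := h₁.isMonicOfDegree.add_smul_of_degree_lt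
    (h₂.isMonicOfDegree.degree_sub_lt h₁.isMonicOfDegree) _
  minimal P hP := by
    refine le_trans (wnorm_le hK0 fun x hx => ?_) (h₁.minimal P hP)
    have hle₁ := mul_norm_eval_le_wnorm hK husc hw0 T₁ hx
    have hle₂ := (h₂.wnorm_eq h₁) ▸ mul_norm_eval_le_wnorm hK husc hw0 T₂ hx
    have heval : (T₁ + (2⁻¹ : ℂ) • (T₂ - T₁)).eval x = 2⁻¹ * (T₁.eval x + T₂.eval x) := by
      simp only [eval_add, eval_smul, eval_sub, smul_eq_mul]
      ring
    rw [heval, norm_mul, norm_inv, Complex.norm_two]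
    nlinarith [norm_add_le (T₁.eval x) (T₂.eval x), hw0 x hx]

theorem not_extremalSet_subset (hK : IsCompact K) (husc : UpperSemicontinuousOn w K)
    (hw0 : ∀ x ∈ K, 0 ≤ w x) (hT : IsWeightedChebyshev K w n T) (hpos : 0 < wnorm K w T)
    {F : Finset ℂ} (hF : F.card ≤ n) : ¬ extremalSet K w T ⊆ F := by
  intro hTF
  set q := Lagrange.interpolate F id (fun x => T.eval x)
  have hinj : InjOn id (F : Set ℂ) := injOn_id _
  have hqT : ∀ x ∈ F, q.eval x = T.eval x := fun x hx =>
    Lagrange.eval_interpolate_at_node _ hinj hx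
  have hq : q.degree < n :=
    (Lagrange.degree_interpolate_lt _ hinj).trans_le (by exact_mod_cast hF)
  obtain ⟨t, ⟨ht0, ht1⟩, μ, hμ, hbound⟩ := hK.exists_forall_convexCombination_le hpos
    (upperSemicontinuousOn_mul_norm_eval husc hw0 T)
    (upperSemicontinuousOn_mul_norm_eval husc hw0 (T - q))
    (fun x hx => mul_norm_eval_le_wnorm hK husc hw0 T hx)
    (fun x hx hxT => by rw [eval_sub, hqT x (hTF ⟨hx, hxT⟩), sub_self, norm_zero, mul_zero])
  refine hμ.not_ge ((hT.minimal _ (hT.isMonicOfDegree.add_smul_of_degree_lt hq (-(t : ℂ)))).trans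
    (wnorm_le (nonempty_of_wnorm_pos hpos) fun x hx => le_trans ?_ (hbound x hx)))
  have heval : (T + (-(t : ℂ)) • q).eval x =
      ((1 - t : ℝ) : ℂ) * T.eval x + (t : ℂ) * (T - q).eval x := by
    simp only [eval_add, eval_smul, eval_sub, smul_eq_mul]
    push_cast
    ring
  calc w x * ‖(T + (-(t : ℂ)) • q).eval x‖
      ≤ w x * ((1 - t) * ‖T.eval x‖ + t * ‖(T - q).eval x‖) := by
        rw [heval]
        refine mul_le_mul_of_nonneg_left ((norm_add_le _ _).trans_eq ?_) (hw0 x hx)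
        rw [norm_mul, norm_mul, Complex.norm_real, Complex.norm_real,
          Real.norm_of_nonneg (by linarith), Real.norm_of_nonneg ht0.le]
    _ = (1 - t) * (w x * ‖T.eval x‖) + t * (w x * ‖(T - q).eval x‖) := by ring

theorem unique (hK : IsCompact K) (husc : UpperSemicontinuousOn w K) (hw0 : ∀ x ∈ K, 0 ≤ w x)
    (h₁ : IsWeightedChebyshev K w n T₁) (h₂ : IsWeightedChebyshev K w n T₂)
    (hpos : 0 < wnorm K w T₁) : T₁ = T₂ := by
  by_contra hne
  set D := T₂ - T₁
  have hD0 : D ≠ 0 := sub_ne_zero.2 (Ne.symm hne)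
  have hQ := h₁.midpoint hK husc hw0 (nonempty_of_wnorm_pos hpos) h₂
  have hQm := hQ.wnorm_eq h₁
  classical
  refine hQ.not_extremalSet_subset hK husc hw0 (hQm ▸ hpos) (F := D.roots.toFinset) ?_ ?_
  · have hD := h₂.isMonicOfDegree.degree_sub_lt h₁.isMonicOfDegree
    exact (Multiset.toFinset_card_le _).trans (card_roots' D) |>.trans
      ((natDegree_lt_iff_degree_lt hD0).2 hD).le
  · rintro x ⟨hx, hxm⟩
    rw [Finset.mem_coe, Multiset.mem_toFinset, mem_roots hD0, IsRoot, eval_sub, sub_eq_zero]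
    refine (Complex.eq_of_mul_norm_le_of_mul_norm_midpoint_eq (hw0 x hx) hpos
      (mul_norm_eval_le_wnorm hK husc hw0 T₁ hx)
      ((h₂.wnorm_eq h₁) ▸ mul_norm_eval_le_wnorm hK husc hw0 T₂ hx) ?_).symm
    rw [← hQm, ← hxm, eval_add, eval_smul, eval_sub, smul_eq_mul]
    congr 2
    ring

end IsWeightedChebyshev

end WeightedChebyshev

theorem stmt8_general (K : Set ℂ) (hK : IsCompact K) (hKreal : ∀ z ∈ K, z.im = 0)
    (n : ℕ) (w : ℂ → ℝ)
    (hw0 : ∀ z ∈ K, 0 ≤ w z)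
    (husc : UpperSemicontinuousOn w K)
    (hsupp : ∃ S : Finset ℂ, ↑S ⊆ K ∧ n + 1 ≤ S.card ∧ ∀ z ∈ S, w z ≠ 0)
    (T : Polynomial ℂ) (hmonic : T.Monic) (hdeg : T.natDegree = n)
    (hmin : ∀ P : Polynomial ℂ, P.Monic → P.natDegree = n → wnorm K w T ≤ wnorm K w P) :
    ∀ k : ℕ, (T.coeff k).im = 0 := by
  have hT : IsWeightedChebyshev K w n T :=
    ⟨⟨hdeg, hmonic⟩, fun P hP => hmin P hP.monic hP.natDegree_eq⟩
  obtain ⟨S, hSK, hScard, hSw⟩ := hsupp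
  have hpos : 0 < wnorm K w (T.map (starRingEnd ℂ)) :=
    wnorm_map_conj hKreal T ▸ wnorm_pos hK husc hw0 hmonic.ne_zero hSK (by omega) hSw
  have hreal : T.map (starRingEnd ℂ) = T := (hT.map_conj hKreal).unique hK husc hw0 hT hpos
  intro k
  rw [← Complex.conj_eq_iff_im, ← coeff_map, hreal]

/-- For `K ⊆ ℝ`, the weighted Chebyshev polynomial has real coefficients. -/
theorem stmt8 (K : Set ℂ) (hK : IsCompact K) (hKreal : ∀ z ∈ K, z.im = 0)
    (n : ℕ) (w : ℂ → ℝ)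
    (hw0 : ∀ z ∈ K, 0 ≤ w z) (hwb : BddAbove (w '' K))
    (husc : UpperSemicontinuousOn w K)
    (hsupp : ∃ S : Finset ℂ, ↑S ⊆ K ∧ n + 1 ≤ S.card ∧ ∀ z ∈ S, w z ≠ 0)
    (T : Polynomial ℂ) (hmonic : T.Monic) (hdeg : T.natDegree = n)
    (hmin : ∀ P : Polynomial ℂ, P.Monic → P.natDegree = n → wnorm K w T ≤ wnorm K w P) :
    ∀ k : ℕ, (T.coeff k).im = 0 :=
  stmt8_general K hK hKreal n w hw0 husc hsupp T hmonic hdeg hmin
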